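/- (a) For every integer n ≥ 1 there exists a real polynomial P_n of degree at most 2n − 2 such that for all x > 0 the n-th derivative of the function x ↦ (tanh x)^{1/2} equals P_n(tanh x)·(tanh x)^{1/2 − n}·(1 − (tanh x)²). (b) For every n ∈ ℕ and every h₁ > 0 there exists C = C(n, h₁) > 0 such that for all real h ≥ h₁ and all integers j, the n-th derivative with respect to h of the function h ↦ (tanh(h·|j|))^{1/2} satisfies |∂_h^n (tanh(h·|j|))^{1/2}| ≤ C. -/

import Mathlib

/-!
If `u' = a (1 - u²)`, as for `u = tanh (· a)`, differentiation turns `P(u) u^κ (1 - u²)` into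
`a Q(u) u^(κ-1) (1 - u²)` with `deg Q ≤ deg P + 2`. Starting from
`(√u)' = a · ½ u^(-1/2) (1 - u²)` and iterating, the `n`-th derivative of `√(tanh (h a))` is
`a^n P_n(t) t^(1/2-n) (1 - t²)` with `t = tanh (h a)`, which for `a = 1` is (a).

For (b) take `a = |j| ≥ 1` (`j = 0` gives the zero function) and `h ≥ h₁`: then
`t ∈ [tanh h₁, 1)`, so `|P_n(t)|` and `t^(1/2-n)` are bounded, while
`a^n (1 - t²) ≤ 4 a^n e^(-2 h₁ a) ≤ 4 n! / (2 h₁)^n`.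
-/

open Real Polynomial Topology
open scoped Nat

namespace Real

theorem tanh_pos {x : ℝ} (hx : 0 < x) : 0 < tanh x := by
  rw [tanh_eq_sinh_div_cosh]
  exact div_pos (sinh_pos_iff.mpr hx) (cosh_pos x)

theorem one_sub_tanh_sq (x : ℝ) : 1 - tanh x ^ 2 = (cosh x ^ 2)⁻¹ := by
  have := cosh_pos x
  rw [tanh_eq_sinh_div_cosh, div_pow, cosh_sq]
  field_simp
  ring

theorem hasDerivAt_tanh (x : ℝ) : HasDerivAt tanh (1 - tanh x ^ 2) x := by
  have h := (hasDerivAt_sinh x).div (hasDerivAt_cosh x) (cosh_pos x).ne'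
  rw [one_sub_tanh_sq, funext tanh_eq_sinh_div_cosh]
  refine h.congr_deriv ?_
  have := cosh_pos x
  rw [← sq, ← sq, cosh_sq]
  field_simp
  ring

theorem tanh_strictMono : StrictMono tanh :=
  strictMono_of_deriv_pos fun x ↦ by
    rw [(hasDerivAt_tanh x).deriv, one_sub_tanh_sq]
    have := cosh_pos x
    positivity

theorem one_sub_tanh_sq_le_four_mul_exp (x : ℝ) : 1 - tanh x ^ 2 ≤ 4 * exp (-(2 * x)) := by
  have hcosh : exp x / 2 ≤ cosh x := by
    rw [cosh_eq]
    linarith [exp_pos (-x)]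
  calc 1 - tanh x ^ 2 = (cosh x ^ 2)⁻¹ := one_sub_tanh_sq x
    _ ≤ ((exp x / 2) ^ 2)⁻¹ := by gcongr
    _ = 4 * exp (-(2 * x)) := by
      rw [div_pow, inv_div, ← exp_nat_mul, exp_neg]
      push_cast
      ring

end Real

theorem pow_mul_exp_neg_mul_le {c : ℝ} (hc : 0 < c) {a : ℝ} (ha : 0 ≤ a) (n : ℕ) :
    a ^ n * exp (-(c * a)) ≤ n ! / c ^ n := by
  have h := pow_div_factorial_le_exp (c * a) (by positivity) n
  rw [div_le_iff₀ (by positivity)] at h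
  rw [le_div_iff₀ (by positivity), exp_neg, mul_right_comm, ← mul_pow, mul_comm a,
    ← div_eq_mul_inv, div_le_iff₀' (exp_pos _)]
  exact h

theorem Polynomial.natDegree_X_mul_derivative_le {R : Type*} [Semiring R] (p : R[X]) :
    (X * derivative p).natDegree ≤ p.natDegree := by
  rcases eq_or_ne p.natDegree 0 with h | h
  · rw [eq_C_of_natDegree_eq_zero h]
    simp
  · have hlt := natDegree_derivative_lt h
    calc (X * derivative p).natDegree ≤ 1 + (derivative p).natDegree :=
          natDegree_mul_le_of_le natDegree_X_le le_rfl
      _ ≤ p.natDegree := by omega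

noncomputable def riccatiDerivPoly (κ : ℝ) (P : ℝ[X]) : ℝ[X] :=
  (X * derivative P + C κ * P) * (1 - X ^ 2) - 2 * X ^ 2 * P

theorem natDegree_riccatiDerivPoly_le (κ : ℝ) (P : ℝ[X]) :
    (riccatiDerivPoly κ P).natDegree ≤ P.natDegree + 2 := by
  have h₁ : (1 - X ^ 2 : ℝ[X]).natDegree ≤ 2 := by compute_degree
  have h₂ : (2 * X ^ 2 : ℝ[X]).natDegree ≤ 2 := by compute_degree
  have hlin : (X * derivative P + C κ * P).natDegree ≤ P.natDegree :=
    natDegree_add_le_of_degree_le (natDegree_X_mul_derivative_le P) (natDegree_C_mul_le κ P)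
  have h₃ : (2 * X ^ 2 * P).natDegree ≤ P.natDegree + 2 :=
    (natDegree_mul_le_of_le h₂ le_rfl).trans_eq (add_comm _ _)
  exact (natDegree_sub_le_of_le (natDegree_mul_le_of_le hlin h₁) h₃).trans (max_self _).le

theorem HasDerivAt.eval_mul_rpow_mul_one_sub_sq {u : ℝ → ℝ} {a x : ℝ}
    (hu : HasDerivAt u (a * (1 - u x ^ 2)) x) (hux : u x ≠ 0) (P : ℝ[X]) (κ : ℝ) :
    HasDerivAt (fun y ↦ P.eval (u y) * u y ^ κ * (1 - u y ^ 2))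
      (a * ((riccatiDerivPoly κ P).eval (u x) * u x ^ (κ - 1) * (1 - u x ^ 2))) x := by
  have h := (((P.hasDerivAt (u x)).comp x hu).mul (hu.rpow_const (p := κ) (Or.inl hux))).mul
    ((hasDerivAt_const x 1).sub (hu.pow 2))
  refine h.congr_deriv ?_
  have hκ : u x ^ κ = u x ^ (κ - 1) * u x := by rw [← rpow_add_one hux, sub_add_cancel]
  simp only [riccatiDerivPoly, Function.comp_apply, Pi.mul_apply, Pi.sub_apply,
    Pi.pow_apply, eval_sub, eval_mul, eval_add, eval_C, eval_X,
    eval_pow, eval_one, eval_ofNat, hκ]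
  push_cast
  ring

theorem hasDerivAt_tanh_mul (a x : ℝ) :
    HasDerivAt (fun y ↦ tanh (y * a)) (a * (1 - tanh (x * a) ^ 2)) x := by
  have h := (hasDerivAt_tanh (x * a)).comp x (hasDerivAt_mul_const a)
  rw [mul_comm] at h
  exact h

noncomputable def sqrtTanhDerivPoly : ℕ → ℝ[X]
  | 0 => C (1 / 2)
  | n + 1 => riccatiDerivPoly (1 / 2 - (n + 1)) (sqrtTanhDerivPoly n)

theorem natDegree_sqrtTanhDerivPoly_le (n : ℕ) : (sqrtTanhDerivPoly n).natDegree ≤ 2 * n := by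
  induction n with
  | zero => simp [sqrtTanhDerivPoly]
  | succ n ih => exact (natDegree_riccatiDerivPoly_le _ _).trans (by omega)

theorem iteratedDeriv_succ_sqrt_tanh_mul (n : ℕ) {a x : ℝ} (ha : 0 < a) (hx : 0 < x) :
    iteratedDeriv (n + 1) (fun t ↦ √(tanh (t * a))) x =
      a ^ (n + 1) * ((sqrtTanhDerivPoly n).eval (tanh (x * a)) *
        tanh (x * a) ^ (1 / 2 - (n + 1) : ℝ) * (1 - tanh (x * a) ^ 2)) := by
  induction n generalizing x with
  | zero =>
    have h := (hasDerivAt_tanh_mul a x).rpow_const (p := 1 / 2)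
      (Or.inl (tanh_pos (mul_pos hx ha)).ne')
    simp only [← sqrt_eq_rpow] at h
    rw [iteratedDeriv_one, h.deriv, sqrtTanhDerivPoly, eval_C]
    ring_nf
  | succ n ih =>
    have hform : iteratedDeriv (n + 1) (fun t ↦ √(tanh (t * a))) =ᶠ[𝓝 x]
        fun y ↦ a ^ (n + 1) * ((sqrtTanhDerivPoly n).eval (tanh (y * a)) *
          tanh (y * a) ^ (1 / 2 - (n + 1) : ℝ) * (1 - tanh (y * a) ^ 2)) :=
      Filter.eventually_of_mem (Ioi_mem_nhds hx) fun y hy ↦ ih hy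
    have h := ((hasDerivAt_tanh_mul a x).eval_mul_rpow_mul_one_sub_sq
      (tanh_pos (mul_pos hx ha)).ne' (sqrtTanhDerivPoly n) (1 / 2 - (n + 1))).const_mul
        (a ^ (n + 1))
    rw [iteratedDeriv_succ, hform.deriv_eq, h.deriv, sqrtTanhDerivPoly]
    push_cast
    ring_nf

theorem pow_mul_one_sub_tanh_sq_mul_le {h₁ h a : ℝ} (hh₁ : 0 < h₁) (hh : h₁ ≤ h) (ha : 0 ≤ a)
    (n : ℕ) : a ^ n * (1 - tanh (h * a) ^ 2) ≤ 4 * (n ! / (2 * h₁) ^ n) :=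
  calc a ^ n * (1 - tanh (h * a) ^ 2) ≤ a ^ n * (4 * exp (-(2 * h₁ * a))) := by
        gcongr
        refine (one_sub_tanh_sq_le_four_mul_exp _).trans ?_
        gcongr 4 * ?_
        exact exp_le_exp.mpr (by nlinarith)
    _ = 4 * (a ^ n * exp (-(2 * h₁ * a))) := by ring
    _ ≤ 4 * (n ! / (2 * h₁) ^ n) := by gcongr; exact pow_mul_exp_neg_mul_le (by positivity) ha n

theorem exists_abs_iteratedDeriv_sqrt_tanh_mul_le (n : ℕ) {h₁ : ℝ} (hh₁ : 0 < h₁) :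
    ∃ C, ∀ h, h₁ ≤ h → ∀ a, 1 ≤ a → |iteratedDeriv n (fun t ↦ √(tanh (t * a))) h| ≤ C := by
  cases n with
  | zero =>
    refine ⟨1, fun h _ a _ ↦ ?_⟩
    rw [iteratedDeriv_zero, abs_of_nonneg (sqrt_nonneg _), sqrt_le_one]
    exact (tanh_lt_one _).le
  | succ n =>
    obtain ⟨M, hM⟩ := (isCompact_Icc (a := (0 : ℝ)) (b := 1)).exists_bound_of_continuousOn
      (sqrtTanhDerivPoly n).continuous.continuousOn
    set κ : ℝ := 1 / 2 - (n + 1)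
    refine ⟨M * tanh h₁ ^ κ * (4 * ((n + 1) ! / (2 * h₁) ^ (n + 1))), fun h hh a ha ↦ ?_⟩
    have ha₀ : 0 ≤ a := zero_le_one.trans ha
    have hha : h₁ ≤ h * a := by nlinarith
    rw [iteratedDeriv_succ_sqrt_tanh_mul n (by linarith) (hh₁.trans_le hh)]
    set t := tanh (h * a)
    have ht : 0 < t := tanh_pos (hh₁.trans_le hha)
    have hone_sub : 0 ≤ 1 - t ^ 2 := by nlinarith [tanh_lt_one (h * a)]
    have hP : |(sqrtTanhDerivPoly n).eval t| ≤ M := hM t ⟨ht.le, (tanh_lt_one _).le⟩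
    have hpow : t ^ κ ≤ tanh h₁ ^ κ :=
      rpow_le_rpow_of_nonpos (tanh_pos hh₁) (tanh_strictMono.monotone hha) (by
        simp only [κ]; linarith [(n.cast_nonneg : (0 : ℝ) ≤ n)])
    have hM₀ : 0 ≤ M := (abs_nonneg _).trans hP
    have hdecay := pow_mul_one_sub_tanh_sq_mul_le hh₁ hh ha₀ (n + 1)
    calc |a ^ (n + 1) * ((sqrtTanhDerivPoly n).eval t * t ^ κ * (1 - t ^ 2))|
        = |(sqrtTanhDerivPoly n).eval t| * t ^ κ * (a ^ (n + 1) * (1 - t ^ 2)) := by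
          rw [abs_mul, abs_mul, abs_mul, abs_of_nonneg (pow_nonneg ha₀ _),
            abs_of_nonneg (rpow_nonneg ht.le κ), abs_of_nonneg hone_sub]
          ring
      _ ≤ M * tanh h₁ ^ κ * (4 * ((n + 1) ! / (2 * h₁) ^ (n + 1))) :=
          mul_le_mul (mul_le_mul hP hpow (by positivity) hM₀) hdecay
            (mul_nonneg (pow_nonneg ha₀ _) hone_sub)
            (mul_nonneg hM₀ (rpow_nonneg (tanh_pos hh₁).le _))

/-- (a) For n ≥ 1 the n-th derivative of x ↦ √(tanh x) on (0,∞) equals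
P_n(tanh x)·(tanh x)^{1/2−n}·(1−tanh²x) for a polynomial P_n of degree ≤ 2n−2.
(b) For every n ∈ ℕ and h₁ > 0 there is C = C(n,h₁) such that for all h ≥ h₁ and all
integers j, |∂_h^n (tanh(h|j|))^{1/2}| ≤ C. -/
theorem sqrt_tanh_derivatives :
    (∀ n : ℕ, 1 ≤ n → ∃ P : Polynomial ℝ, P.natDegree ≤ 2 * n - 2 ∧
      ∀ x : ℝ, 0 < x →
        iteratedDeriv n (fun t : ℝ => Real.sqrt (Real.tanh t)) x =
          P.eval (Real.tanh x) * Real.tanh x ^ ((1 : ℝ) / 2 - (n : ℝ)) *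
            (1 - Real.tanh x ^ 2)) ∧
    (∀ (n : ℕ) (h₁ : ℝ), 0 < h₁ → ∃ C : ℝ, 0 < C ∧ ∀ h : ℝ, h₁ ≤ h → ∀ j : ℤ,
        |iteratedDeriv n (fun t : ℝ => Real.sqrt (Real.tanh (t * |(j : ℝ)|))) h| ≤ C) := by
  constructor
  · intro n hn
    obtain ⟨m, rfl⟩ := Nat.exists_eq_add_of_le' hn
    refine ⟨sqrtTanhDerivPoly m, (natDegree_sqrtTanhDerivPoly_le m).trans (by omega),
      fun x hx ↦ ?_⟩
    simpa using iteratedDeriv_succ_sqrt_tanh_mul m one_pos hx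
  · intro n h₁ hh₁
    obtain ⟨C, hC⟩ := exists_abs_iteratedDeriv_sqrt_tanh_mul_le n hh₁
    refine ⟨max C 1, by positivity, fun h hh j ↦ ?_⟩
    rcases eq_or_ne j 0 with rfl | hj
    · simp
    · exact (hC h hh _ (by exact_mod_cast Int.one_le_abs hj)).trans (le_max_left _ _)
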